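/- For every nonnegative integer r and every partition λ with n = |λ|: as an identity of polynomials in z, D^{r+1}( φ_λ(z)/H_λ ) = z(z+1)⋯(z+r) · φ_λ(z+r+1)/H_λ, where φ_λ(z) := ∏_{i=1}^{n} (z + n + λ_i − i). In particular, D^{r+1}( φ_λ(−r)/H_λ ) = 0 for every partition λ, i.e. λ ↦ φ_λ(−r) is a D-polynomial of degree at most r. -/

import Mathlib

/-!
Write `n = |μ|` and `v_k = k - λ_k` (`rowNode μ k`). Frobenius' form of the hook length formula,
`H_μ · ∏_{i<j<m} (v_j - v_i) = ∏_{i<m} (m - 1 - v_i)!`, shows that adding a box at the end of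
row `k` multiplies `H` by `∏_{j≤n, j≠k} (v_k - v_j) / ∏_{j<n} (v_k - v_j - 1)`. With `w = z + n`,
the sum over the addable boxes in `D(φ(z)/H)(μ)` is therefore `-1/H_μ` times the value at `w` of
the Lagrange interpolant, on the nodes `v_0 < ⋯ < v_n`, of the monic polynomial
`Q(t) = (t - w - 1) ∏_{j<n} (t - v_j - 1)` of degree `n + 1`, which vanishes at the nodes of
the rows that cannot be lengthened. That interpolant is `Q - ∏_j (t - v_j)`, and
`Q(w) = -φ(z)`, `∏_j (w - v_j) = z φ(z+1)`, so `D(φ(z)/H) = z φ(z+1)/H`. Iterating, `D^{r+1}`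
produces the factor `z(z+1)⋯(z+r)`, which vanishes at `z = -r`.
-/

open scoped Classical

namespace HookDiff

/-- The hook length of the box `c` in the Young diagram `μ`: the number of boxes
directly to its right, directly below/above it in its column, plus the box itself. -/
def hook (μ : YoungDiagram) (c : ℕ × ℕ) : ℕ :=
  (μ.cells.filter (fun d => (d.1 = c.1 ∧ c.2 ≤ d.2) ∨ (d.2 = c.2 ∧ c.1 ≤ d.1))).card

/-- `H μ` is the product of all hook lengths of `μ`. -/
def H (μ : YoungDiagram) : ℚ := ∏ c ∈ μ.cells, (hook μ c : ℚ)

/-- The cells that can be added to `μ` to produce a Young diagram (inner corners). -/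
noncomputable def addables (μ : YoungDiagram) : Finset (ℕ × ℕ) :=
  (Finset.range (μ.card + 1) ×ˢ Finset.range (μ.card + 1)).filter
    (fun c => c ∉ μ ∧ IsLowerSet (↑(insert c μ.cells) : Set (ℕ × ℕ)))

/-- Add a box at cell `c` to `μ` (junk value `μ` if the result is not a diagram). -/
noncomputable def addBox (μ : YoungDiagram) (c : ℕ × ℕ) : YoungDiagram :=
  if h : IsLowerSet (↑(insert c μ.cells) : Set (ℕ × ℕ)) then ⟨insert c μ.cells, h⟩ else μ

/-- The cells that can be removed from `μ` leaving a Young diagram (outer corners). -/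
noncomputable def removables (μ : YoungDiagram) : Finset (ℕ × ℕ) :=
  μ.cells.filter (fun c => IsLowerSet (↑(μ.cells.erase c) : Set (ℕ × ℕ)))

/-- Remove the box at cell `c` from `μ` (junk value `μ` if the result is not a diagram). -/
noncomputable def removeBox (μ : YoungDiagram) (c : ℕ × ℕ) : YoungDiagram :=
  if h : IsLowerSet (↑(μ.cells.erase c) : Set (ℕ × ℕ)) then ⟨μ.cells.erase c, h⟩ else μ

/-- The difference operator `D`: `Dg(λ) = Σ_{λ⁺} g(λ⁺) − g(λ)`, where `λ⁺` runs over
all partitions obtained from `λ` by adding one box. -/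
noncomputable def D (g : YoungDiagram → ℚ) : YoungDiagram → ℚ :=
  fun μ => (∑ c ∈ addables μ, g (addBox μ c)) - g μ

/-- The difference operator `D⁻`: `D⁻g(λ) = |λ|·g(λ) − Σ_{λ⁻} g(λ⁻)`, where `λ⁻` runs
over all partitions obtained from `λ` by removing one box. -/
noncomputable def Dminus (g : YoungDiagram → ℚ) : YoungDiagram → ℚ :=
  fun μ => (μ.card : ℚ) * g μ - ∑ c ∈ removables μ, g (removeBox μ c)

/-- `fskew n μ λ` is the number of standard Young tableaux of skew shape `λ/μ`
(with `n = |λ| - |μ|`), i.e. the number of chains `μ = ν₀ ⊂ ν₁ ⊂ ⋯ ⊂ ν_n = λ`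
in which each diagram is obtained from the previous one by adding a single box. -/
noncomputable def fskew : ℕ → YoungDiagram → YoungDiagram → ℕ
  | 0, μ, l => if μ = l then 1 else 0
  | n + 1, μ, l => ∑ c ∈ addables μ, fskew n (addBox μ c) l

/-- `f_λ`, the number of standard Young tableaux of shape `λ`. -/
noncomputable def f (l : YoungDiagram) : ℕ := fskew l.card ⊥ l

/-- `S(λ, r) = Σ_{□∈λ} ∏_{j=1}^{r} (h_□² − j²)`. -/
def S (l : YoungDiagram) (r : ℕ) : ℚ :=
  ∑ c ∈ l.cells, ∏ j ∈ Finset.Icc 1 r, ((hook l c : ℚ) ^ 2 - (j : ℚ) ^ 2)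

/-- `K_r = (2r)!·(2r+1)! / (r!·(r+1)!²)`. -/
def K (r : ℕ) : ℚ :=
  ((2 * r).factorial : ℚ) * ((2 * r + 1).factorial : ℚ) /
    ((r.factorial : ℚ) * ((r + 1).factorial : ℚ) ^ 2)

/-- The content of the box `c = (i, j)` is `j - i`. -/
def content (c : ℕ × ℕ) : ℚ := (c.2 : ℚ) - (c.1 : ℚ)

/-- `C(λ, r) = Σ_{□∈λ} ∏_{j=0}^{r-1} (c_□² − j²)`. -/
def Ccont (l : YoungDiagram) (r : ℕ) : ℚ :=
  ∑ c ∈ l.cells, ∏ j ∈ Finset.range r, (content c ^ 2 - (j : ℚ) ^ 2)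


/-- `φ_λ(z) = ∏_{i=1}^{n} (z + n + λ_i − i)` with `n = |λ|`, evaluated at `z : ℚ`
(here `λ_i = rowLen (i-1)`, and `λ_i = 0` beyond the last part). -/
def phiEval (μ : YoungDiagram) (z : ℚ) : ℚ :=
  ∏ i ∈ Finset.range μ.card, (z + (μ.card : ℚ) + (μ.rowLen i : ℚ) - (i : ℚ) - 1)

open Finset Polynomial
open YoungDiagram (mem_iff_lt_rowLen mem_iff_lt_colLen)
open scoped Nat

section Diagram

variable {μ : YoungDiagram} {m i j : ℕ} {c : ℕ × ℕ}

lemma colLen_le_card (μ : YoungDiagram) (j : ℕ) : μ.colLen j ≤ μ.card := by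
  rw [μ.colLen_eq_card]
  exact card_le_card (filter_subset _ _)

lemma rowLen_le_card (μ : YoungDiagram) (i : ℕ) : μ.rowLen i ≤ μ.card := by
  rw [μ.rowLen_eq_card]
  exact card_le_card (filter_subset _ _)

lemma rowLen_card (μ : YoungDiagram) : μ.rowLen μ.card = 0 := by
  by_contra h
  have := mem_iff_lt_colLen.mp (mem_iff_lt_rowLen.mpr (Nat.pos_of_ne_zero h))
  exact absurd (colLen_le_card μ 0) (not_le.mpr this)

lemma rowLen_eq_zero_of_le (hm : μ.rowLen m = 0) (h : m ≤ i) : μ.rowLen i = 0 := by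
  have := μ.rowLen_anti m i h
  omega

lemma lt_of_mem_of_rowLen_eq_zero (hm : μ.rowLen m = 0) (hc : (i, j) ∈ μ) : i < m := by
  by_contra h
  have := mem_iff_lt_rowLen.mp hc
  rw [rowLen_eq_zero_of_le hm (not_lt.mp h)] at this
  omega

lemma colLen_le_of_rowLen_eq_zero (hm : μ.rowLen m = 0) (j : ℕ) : μ.colLen j ≤ m := by
  by_contra h
  exact (lt_of_mem_of_rowLen_eq_zero hm (mem_iff_lt_colLen.mpr (not_le.mp h))).false

lemma rowLen_eq_of_forall_mem_iff {t : ℕ} (h : ∀ j, (i, j) ∈ μ ↔ j < t) : μ.rowLen i = t := by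
  have h1 := h (μ.rowLen i)
  have h2 := h t
  rw [mem_iff_lt_rowLen] at h1 h2
  omega

lemma prod_cells_eq_prod_rows {M : Type*} [CommMonoid M] (hm : μ.rowLen m = 0) (g : ℕ × ℕ → M) :
    ∏ c ∈ μ.cells, g c = ∏ i ∈ range m, ∏ j ∈ range (μ.rowLen i), g (i, j) := by
  rw [← prod_fiberwise_of_maps_to (g := Prod.fst) (t := range m)
    (fun c hc => mem_range.mpr (lt_of_mem_of_rowLen_eq_zero hm ((μ.mem_cells c).mp hc)))]
  refine prod_congr rfl fun i _ => ?_
  rw [show μ.cells.filter (·.1 = i) = μ.row i from rfl, YoungDiagram.row_eq_prod,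
    prod_product, prod_singleton]

lemma hook_add_add_add_one (hc : (i, j) ∈ μ) :
    hook μ (i, j) + i + j + 1 = μ.rowLen i + μ.colLen j := by
  have hrow := mem_iff_lt_rowLen.mp hc
  have hcol := mem_iff_lt_colLen.mp hc
  have hcells : μ.cells.filter (fun d => (d.1 = i ∧ j ≤ d.2) ∨ (d.2 = j ∧ i ≤ d.1))
      = {i} ×ˢ Ico j (μ.rowLen i) ∪ Ico (i + 1) (μ.colLen j) ×ˢ {j} := by
    ext ⟨a, b⟩
    simp only [mem_filter, mem_union, mem_product, mem_singleton, mem_Ico, YoungDiagram.mem_cells]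
    constructor
    · rintro ⟨hab, ⟨rfl, hb⟩ | ⟨rfl, ha⟩⟩
      · exact Or.inl ⟨rfl, hb, mem_iff_lt_rowLen.mp hab⟩
      · rcases ha.eq_or_lt with rfl | ha
        · exact Or.inl ⟨rfl, le_rfl, hrow⟩
        · exact Or.inr ⟨⟨ha, mem_iff_lt_colLen.mp hab⟩, rfl⟩
    · rintro (⟨rfl, hb, hb'⟩ | ⟨⟨ha, ha'⟩, rfl⟩)
      · exact ⟨mem_iff_lt_rowLen.mpr hb', Or.inl ⟨rfl, hb⟩⟩
      · exact ⟨mem_iff_lt_colLen.mpr ha', Or.inr ⟨rfl, by omega⟩⟩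
  have hdisj : Disjoint ({i} ×ˢ Ico j (μ.rowLen i)) (Ico (i + 1) (μ.colLen j) ×ˢ {j}) := by
    simp only [disjoint_left, mem_product, mem_singleton, mem_Ico]
    omega
  rw [hook, hcells, card_union_of_disjoint hdisj, card_product, card_product]
  simp only [card_singleton, Nat.card_Ico]
  omega

lemma hook_pos (hc : c ∈ μ) : 0 < hook μ c :=
  card_pos.mpr ⟨c, mem_filter.mpr ⟨(μ.mem_cells c).mpr hc, Or.inl ⟨rfl, le_rfl⟩⟩⟩

lemma H_ne_zero (μ : YoungDiagram) : H μ ≠ 0 :=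
  prod_ne_zero_iff.mpr fun c hc => Nat.cast_ne_zero.mpr (hook_pos ((μ.mem_cells c).mp hc)).ne'

end Diagram

section Frobenius

variable {μ : YoungDiagram} {m i : ℕ}

def beta (μ : YoungDiagram) (m i : ℕ) : ℕ := μ.rowLen i + (m - 1 - i)

lemma beta_lt_beta {j : ℕ} (hij : i < j) (hj : j < m) : beta μ m j < beta μ m i := by
  have := μ.rowLen_anti i j hij.le
  unfold beta
  omega

lemma injOn_hook_row : Set.InjOn (fun j => hook μ (i, j)) (range (μ.rowLen i)) := by
  intro a ha b hb hab
  have ha' := hook_add_add_add_one (mem_iff_lt_rowLen.mpr (mem_range.mp ha))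
  have hb' := hook_add_add_add_one (mem_iff_lt_rowLen.mpr (mem_range.mp hb))
  simp only at hab
  rcases lt_trichotomy a b with h | h | h
  · have := μ.colLen_anti a b h.le; omega
  · exact h
  · have := μ.colLen_anti b a h.le; omega

lemma injOn_beta_sub : Set.InjOn (fun j => beta μ m i - beta μ m j) (Ico (i + 1) m) := by
  intro a ha b hb hab
  simp only [coe_Ico, Set.mem_Ico] at ha hb
  have := beta_lt_beta (μ := μ) (show i < a by omega) ha.2
  have := beta_lt_beta (μ := μ) (show i < b by omega) hb.2
  rcases lt_trichotomy a b with h | h | h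
  · have := beta_lt_beta (μ := μ) h hb.2; simp only at hab; omega
  · exact h
  · have := beta_lt_beta (μ := μ) h ha.2; simp only at hab; omega

/-- A coincidence `hook μ (i, j) = β_i - β_k` would force `λ'_j + λ_k = j + k + 1`; but according
as `(k, j)` lies in `μ` or not, `λ'_j + λ_k` is at least `j + k + 2` or at most `j + k`. -/
lemma disjoint_hook_row_beta_sub :
    Disjoint ((range (μ.rowLen i)).image fun j => hook μ (i, j))
      ((Ico (i + 1) m).image fun k => beta μ m i - beta μ m k) := by
  simp only [disjoint_left, mem_image, mem_range, mem_Ico]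
  rintro _ ⟨j, hj, rfl⟩ ⟨k, hk, hjk⟩
  have hij := hook_add_add_add_one (mem_iff_lt_rowLen.mpr hj)
  have := beta_lt_beta (μ := μ) hk.1 hk.2
  have := μ.rowLen_anti i k (by omega)
  unfold beta at *
  by_cases hkj : (k, j) ∈ μ
  · have := mem_iff_lt_rowLen.mp hkj
    have := mem_iff_lt_colLen.mp hkj
    omega
  · have h1 : μ.rowLen k ≤ j := by rwa [mem_iff_lt_rowLen, not_lt] at hkj
    have h2 : μ.colLen j ≤ k := by rwa [mem_iff_lt_colLen, not_lt] at hkj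
    omega

lemma image_hook_row_union_image_beta_sub (hm : μ.rowLen m = 0) (hi : i < m) :
    ((range (μ.rowLen i)).image fun j => hook μ (i, j)) ∪
        ((Ico (i + 1) m).image fun k => beta μ m i - beta μ m k)
      = Ico 1 (beta μ m i + 1) := by
  refine eq_of_subset_of_card_le (fun t ht => ?_) ?_
  · simp only [mem_union, mem_image, mem_range, mem_Ico] at ht ⊢
    rcases ht with ⟨j, hj, rfl⟩ | ⟨k, hk, rfl⟩
    · have hc := mem_iff_lt_rowLen.mpr hj
      have := hook_add_add_add_one hc
      have := hook_pos hc
      have := colLen_le_of_rowLen_eq_zero hm j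
      unfold beta
      omega
    · have := beta_lt_beta (μ := μ) hk.1 hk.2
      omega
  · rw [card_union_of_disjoint disjoint_hook_row_beta_sub,
      Finset.card_image_of_injOn injOn_hook_row, Finset.card_image_of_injOn injOn_beta_sub,
      card_range, Nat.card_Ico, Nat.card_Ico]
    unfold beta
    omega

lemma prod_hook_row_mul_prod_beta_sub (hm : μ.rowLen m = 0) (hi : i < m) :
    (∏ j ∈ range (μ.rowLen i), hook μ (i, j)) * ∏ k ∈ Ico (i + 1) m, (beta μ m i - beta μ m k)
      = (beta μ m i)! := by
  rw [← prod_Ico_id_eq_factorial, ← image_hook_row_union_image_beta_sub hm hi,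
    prod_union disjoint_hook_row_beta_sub, prod_image injOn_hook_row, prod_image injOn_beta_sub]

theorem prod_hook_mul_prod_prod_beta_sub (hm : μ.rowLen m = 0) :
    (∏ c ∈ μ.cells, hook μ c) * ∏ i ∈ range m, ∏ k ∈ Ico (i + 1) m, (beta μ m i - beta μ m k)
      = ∏ i ∈ range m, (beta μ m i)! := by
  rw [prod_cells_eq_prod_rows hm, ← prod_mul_distrib]
  exact prod_congr rfl fun i hi => prod_hook_row_mul_prod_beta_sub hm (mem_range.mp hi)

end Frobenius

section Vandermonde

variable {R : Type*} [CommRing R]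

def vandermondeProd (f : ℕ → R) (m : ℕ) : R := ∏ j ∈ range m, ∏ i ∈ range j, (f j - f i)

lemma vandermondeProd_succ (f : ℕ → R) (m : ℕ) :
    vandermondeProd f (m + 1) = vandermondeProd f m * ∏ i ∈ range m, (f m - f i) :=
  prod_range_succ _ _

lemma vandermondeProd_congr {f g : ℕ → R} {m : ℕ} (h : ∀ i < m, f i = g i) :
    vandermondeProd f m = vandermondeProd g m :=
  prod_congr rfl fun j hj => prod_congr rfl fun i hi => by
    have hj := mem_range.mp hj
    rw [h j hj, h i ((mem_range.mp hi).trans hj)]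

lemma vandermondeProd_ne_zero [IsDomain R] {f : ℕ → R} (hf : Function.Injective f) (m : ℕ) :
    vandermondeProd f m ≠ 0 :=
  prod_ne_zero_iff.mpr fun _ _ => prod_ne_zero_iff.mpr fun _ hi =>
    sub_ne_zero.mpr (hf.ne (mem_range.mp hi).ne')

lemma vandermondeProd_mul_prod_erase {f g : ℕ → R} {m k : ℕ} (hk : k < m)
    (hg : ∀ i, g i = f i - if i = k then 1 else 0) :
    vandermondeProd g m * ∏ j ∈ (range m).erase k, (f k - f j)
      = vandermondeProd f m * ∏ j ∈ (range m).erase k, (f k - f j - 1) := by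
  induction m with
  | zero => exact absurd hk (Nat.not_lt_zero k)
  | succ m ih =>
    rcases Nat.lt_succ_iff_lt_or_eq.mp hk with hk | rfl
    · have hgf : ∀ i, i ≠ k → g i = f i := fun i hi => by rw [hg, if_neg hi, sub_zero]
      have hPg : ∏ i ∈ range m, (g m - g i)
          = (f m - f k + 1) * ∏ i ∈ (range m).erase k, (f m - f i) := by
        rw [← mul_prod_erase _ _ (mem_range.mpr hk), hgf m hk.ne', hg k, if_pos rfl]
        refine congrArg₂ _ (by ring) (prod_congr rfl fun i hi => ?_)
        rw [hgf i (ne_of_mem_erase hi)]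
      have hPf : ∏ i ∈ range m, (f m - f i)
          = (f m - f k) * ∏ i ∈ (range m).erase k, (f m - f i) :=
        (mul_prod_erase _ _ (mem_range.mpr hk)).symm
      rw [vandermondeProd_succ, vandermondeProd_succ, range_add_one, erase_insert_of_ne hk.ne',
        prod_insert (by simp), prod_insert (by simp), hPg, hPf]
      linear_combination
        (f m - f k + 1) * (∏ i ∈ (range m).erase k, (f m - f i)) * (f k - f m) * ih hk
    · have hgf : ∀ i < k, g i = f i := fun i hi => by rw [hg, if_neg hi.ne, sub_zero]
      have hPg : ∏ i ∈ range k, (g k - g i) = ∏ i ∈ range k, (f k - f i - 1) :=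
        prod_congr rfl fun i hi => by
          rw [hg k, if_pos rfl, hgf i (mem_range.mp hi)]
          ring
      rw [vandermondeProd_succ, vandermondeProd_succ, vandermondeProd_congr hgf, range_add_one,
        erase_insert notMem_range_self, hPg]
      ring

end Vandermonde

section HookRatio

variable {μ ν : YoungDiagram} {m k : ℕ}

def rowNode (μ : YoungDiagram) (i : ℕ) : ℚ := i - μ.rowLen i

lemma rowNode_strictMono (μ : YoungDiagram) : StrictMono (rowNode μ) := by
  refine strictMono_nat_of_lt_succ fun i => ?_
  have : (μ.rowLen (i + 1) : ℚ) ≤ μ.rowLen i := by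
    exact_mod_cast μ.rowLen_anti i _ i.le_succ
  simp only [rowNode, Nat.cast_add, Nat.cast_one]
  linarith

lemma cast_beta {i : ℕ} (hi : i < m) : (beta μ m i : ℚ) = m - 1 - rowNode μ i := by
  rw [beta, rowNode, Nat.cast_add, Nat.cast_sub (by omega), Nat.cast_sub (by omega)]
  ring

theorem H_mul_vandermondeProd (hm : μ.rowLen m = 0) :
    H μ * vandermondeProd (rowNode μ) m = ∏ i ∈ range m, ((beta μ m i)! : ℚ) := by
  have h := congrArg (Nat.cast : ℕ → ℚ) (prod_hook_mul_prod_prod_beta_sub hm)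
  push_cast at h
  rw [H, ← h, vandermondeProd,
    prod_comm' (t' := range m) (s' := fun i => Ico (i + 1) m) (by simp; omega)]
  refine congrArg _ (prod_congr rfl fun i _ => prod_congr rfl fun j hj => ?_)
  obtain ⟨hij, hj⟩ := mem_Ico.mp hj
  rw [Nat.cast_sub (beta_lt_beta hij hj).le, cast_beta hj, cast_beta (by omega)]
  ring

lemma rowNode_eq_sub_ite (hν : ∀ i, ν.rowLen i = μ.rowLen i + if i = k then 1 else 0) (i : ℕ) :
    rowNode ν i = rowNode μ i - if i = k then 1 else 0 := by
  simp only [rowNode, hν]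
  split_ifs <;> push_cast <;> ring

lemma prod_factorial_beta_eq_mul (hν : ∀ i, ν.rowLen i = μ.rowLen i + if i = k then 1 else 0)
    (hk : k < m) :
    ∏ i ∈ range m, ((beta ν m i)! : ℚ) = (beta μ m k + 1) * ∏ i ∈ range m, ((beta μ m i)! : ℚ) := by
  have hbeta : ∀ i, beta ν m i = beta μ m i + if i = k then 1 else 0 := fun i => by
    simp only [beta, hν]
    split_ifs <;> omega
  have hkm := mem_range.mpr hk
  rw [← mul_prod_erase _ _ hkm, ← mul_prod_erase _ _ hkm, hbeta, if_pos rfl, Nat.factorial_succ,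
    prod_congr rfl fun i hi => by rw [hbeta, if_neg (ne_of_mem_erase hi), add_zero]]
  push_cast
  ring

/-- The factor `j = m` on the left is `-(m - v_k + 1)` because row `m` is empty, and the
factor `j = k` on the right is `-1`. -/
lemma prod_erase_rowNode_sub_sub_one (hm : μ.rowLen m = 0) (hk : k ≤ m) :
    ∏ j ∈ (range (m + 1)).erase k, (rowNode μ k - rowNode μ j - 1)
      = (m - rowNode μ k + 1) * ∏ j ∈ range m, (rowNode μ k - rowNode μ j - 1) := by
  have h := mul_prod_erase (range (m + 1)) (fun j => rowNode μ k - rowNode μ j - 1)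
    (mem_range.mpr (Nat.lt_succ_of_le hk))
  rw [prod_range_succ, show rowNode μ m = m by simp [rowNode, hm]] at h
  linear_combination -h

theorem H_mul_prod_rowNode_sub_sub_one (hm : μ.rowLen m = 0) (hk : k ≤ m)
    (hν : ∀ i, ν.rowLen i = μ.rowLen i + if i = k then 1 else 0) :
    H ν * ∏ j ∈ range m, (rowNode μ k - rowNode μ j - 1)
      = H μ * ∏ j ∈ (range (m + 1)).erase k, (rowNode μ k - rowNode μ j) := by
  set v := rowNode μ
  have hkm : k < m + 1 := Nat.lt_succ_of_le hk
  have hμm : μ.rowLen (m + 1) = 0 := rowLen_eq_zero_of_le hm m.le_succ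
  have hνm : ν.rowLen (m + 1) = 0 := by rw [hν, if_neg hkm.ne', hμm]
  have hfrobμ := H_mul_vandermondeProd hμm
  have hfrobν := H_mul_vandermondeProd hνm
  rw [prod_factorial_beta_eq_mul hν hkm, cast_beta hkm] at hfrobν
  push_cast at hfrobν
  have hshift := vandermondeProd_mul_prod_erase hkm (rowNode_eq_sub_ite hν)
  have hsplit := prod_erase_rowNode_sub_sub_one hm hk
  have hc : (m : ℚ) - v k + 1 ≠ 0 := by
    have : v k ≤ k := sub_le_self _ (Nat.cast_nonneg _)
    have : (k : ℚ) ≤ m := by exact_mod_cast hk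
    linarith
  apply mul_left_cancel₀ (mul_ne_zero hc
    (vandermondeProd_ne_zero (rowNode_strictMono ν).injective (m + 1)))
  linear_combination (m - v k + 1) * (∏ j ∈ range m, (v k - v j - 1)) * hfrobν
    - (m - v k + 1) ^ 2 * (∏ j ∈ range m, (v k - v j - 1)) * hfrobμ
    - (m - v k + 1) * H μ * vandermondeProd v (m + 1) * hsplit - (m - v k + 1) * H μ * hshift

end HookRatio

section AddBox

variable {μ : YoungDiagram} {k : ℕ}

def AddableRow (μ : YoungDiagram) (k : ℕ) : Prop := k = 0 ∨ μ.rowLen k < μ.rowLen (k - 1)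

lemma notMem_and_isLowerSet_insert_iff {i j : ℕ} :
    ((i, j) ∉ μ ∧ IsLowerSet (↑(insert (i, j) μ.cells) : Set (ℕ × ℕ)))
      ↔ j = μ.rowLen i ∧ AddableRow μ i := by
  constructor
  · rintro ⟨hij, hlow⟩
    have below : ∀ a b, a ≤ i → b ≤ j → (a, b) ≠ (i, j) → (a, b) ∈ μ := fun a b ha hb hne => by
      have := hlow (show ((a, b) : ℕ × ℕ) ≤ (i, j) from ⟨ha, hb⟩) (by simp)
      simpa [hne] using this
    rw [mem_iff_lt_rowLen, not_lt] at hij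
    have hj : j = μ.rowLen i := by
      by_contra h
      have := below i (μ.rowLen i) le_rfl hij (by simp; omega)
      exact (mem_iff_lt_rowLen.mp this).false
    refine ⟨hj, (Nat.eq_zero_or_pos i).imp id fun hi => ?_⟩
    have := below (i - 1) j (by omega) le_rfl (by simp; omega)
    rwa [mem_iff_lt_rowLen, hj] at this
  · rintro ⟨rfl, hi⟩
    refine ⟨fun h => (mem_iff_lt_rowLen.mp h).false, fun ⟨a, b⟩ ⟨p, q⟩ hle hab => ?_⟩
    obtain ⟨hp, hq⟩ := Prod.mk_le_mk.mp hle
    simp only [coe_insert, Set.mem_insert_iff, mem_coe, YoungDiagram.mem_cells, Prod.mk.injEq]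
      at hab ⊢
    rcases hab with ⟨rfl, rfl⟩ | hab
    · by_cases hpq : p = a ∧ q = μ.rowLen a
      · exact Or.inl hpq
      refine Or.inr (mem_iff_lt_rowLen.mpr ?_)
      rcases hq.lt_or_eq with hq | rfl
      · exact hq.trans_le (μ.rowLen_anti p a hp)
      · have hpa : p < a := by omega
        rcases hi with rfl | hi
        · omega
        · exact hi.trans_le (μ.rowLen_anti p (a - 1) (by omega))
    · exact Or.inr (μ.up_left_mem hp hq hab)

lemma addables_eq (μ : YoungDiagram) :
    addables μ = ((range (μ.card + 1)).filter (AddableRow μ)).image fun k => (k, μ.rowLen k) := by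
  ext ⟨i, j⟩
  simp only [addables, mem_filter, mem_product, mem_range, mem_image, Prod.mk.injEq,
    notMem_and_isLowerSet_insert_iff]
  constructor
  · rintro ⟨⟨hi, -⟩, rfl, hadd⟩
    exact ⟨i, ⟨hi, hadd⟩, rfl, rfl⟩
  · rintro ⟨k, ⟨hk, hadd⟩, rfl, rfl⟩
    exact ⟨⟨hk, Nat.lt_succ_of_le (rowLen_le_card μ k)⟩, rfl, hadd⟩

lemma cells_addBox (hk : AddableRow μ k) :
    (addBox μ (k, μ.rowLen k)).cells = insert (k, μ.rowLen k) μ.cells := by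
  rw [addBox, dif_pos (notMem_and_isLowerSet_insert_iff.mpr ⟨rfl, hk⟩).2]

lemma rowLen_addBox (hk : AddableRow μ k) (i : ℕ) :
    (addBox μ (k, μ.rowLen k)).rowLen i = μ.rowLen i + if i = k then 1 else 0 := by
  refine rowLen_eq_of_forall_mem_iff fun j => ?_
  rw [← YoungDiagram.mem_cells, cells_addBox hk, mem_insert, YoungDiagram.mem_cells,
    mem_iff_lt_rowLen, Prod.mk.injEq]
  rcases eq_or_ne i k with rfl | h
  · rw [if_pos rfl]
    omega
  · rw [if_neg h, add_zero]
    simp [h]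

lemma card_addBox (hk : AddableRow μ k) : (addBox μ (k, μ.rowLen k)).card = μ.card + 1 := by
  rw [YoungDiagram.card, cells_addBox hk, card_insert_of_notMem]
  exact fun h => (mem_iff_lt_rowLen.mp ((μ.mem_cells _).mp h)).false

end AddBox

section Lagrange

variable {F ι : Type*} [Field F] [DecidableEq ι] {s : Finset ι} {v : ι → F}

/-- The left side is the Lagrange interpolant of `Q` evaluated at `w`; since `Q` is monic of
degree `#s`, that interpolant is `Q - nodal s v`. -/
theorem sum_eval_mul_prod_div_eq_eval_sub_prod (hvs : Set.InjOn v s) {Q : F[X]} (hQ : Q.Monic)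
    (hdeg : Q.natDegree = #s) (w : F) :
    ∑ i ∈ s, Q.eval (v i) * ∏ j ∈ s.erase i, (w - v j) / (v i - v j)
      = Q.eval w - ∏ i ∈ s, (w - v i) := by
  have hlt : (Q - Lagrange.nodal s v).degree < #s := by
    rw [← hdeg, ← degree_eq_natDegree hQ.ne_zero]
    refine degree_sub_lt_left ?_ hQ.ne_zero ?_
    · rw [degree_eq_natDegree hQ.ne_zero, hdeg, Lagrange.degree_nodal]
    · rw [hQ.leadingCoeff, Lagrange.nodal_monic.leadingCoeff]
  have h := congrArg (eval w) (Lagrange.eq_interpolate_of_eval_eq (fun i => Q.eval (v i)) hvs hlt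
    fun i hi => by rw [eval_sub, Lagrange.eval_nodal_at_node hi, sub_zero])
  rw [eval_sub, Lagrange.eval_nodal, Lagrange.interpolate_apply, eval_finsetSum] at h
  rw [h]
  refine sum_congr rfl fun i _ => ?_
  simp only [eval_mul, eval_C, Lagrange.basis, Lagrange.basisDivisor, eval_prod, eval_sub, eval_X,
    div_eq_inv_mul]

end Lagrange

section DifferenceOperator

variable {μ : YoungDiagram} {k : ℕ}

lemma rowNode_card (μ : YoungDiagram) : rowNode μ μ.card = μ.card := by
  simp [rowNode, rowLen_card]

lemma phiEval_eq_prod_rowNode (μ : YoungDiagram) (z : ℚ) :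
    phiEval μ z = ∏ i ∈ range μ.card, (z + μ.card - rowNode μ i - 1) :=
  prod_congr rfl fun i _ => by rw [rowNode]; ring

lemma prod_sub_rowNode_eq_mul_phiEval (μ : YoungDiagram) (z : ℚ) :
    ∏ i ∈ range (μ.card + 1), (z + μ.card - rowNode μ i) = z * phiEval μ (z + 1) := by
  rw [prod_range_succ, rowNode_card, phiEval_eq_prod_rowNode, mul_comm]
  exact congrArg₂ _ (by ring) (prod_congr rfl fun j _ => by ring)

lemma prod_rowNode_sub_sub_one_eq_zero {n : ℕ} (hk : ¬AddableRow μ k) (hkn : k ≤ n) :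
    ∏ j ∈ range n, (rowNode μ k - rowNode μ j - 1) = 0 := by
  obtain ⟨k, rfl⟩ := Nat.exists_eq_succ_of_ne_zero fun h => hk (Or.inl h)
  have hrow : μ.rowLen (k + 1) = μ.rowLen k :=
    le_antisymm (μ.rowLen_anti k _ k.le_succ) (not_lt.mp fun h => hk (Or.inr h))
  refine prod_eq_zero (i := k) (mem_range.mpr (by omega)) ?_
  simp only [rowNode, hrow, Nat.cast_succ]
  ring

lemma phiEval_addBox_div_H (hk : AddableRow μ k) (hkn : k ≤ μ.card) (z : ℚ) :
    phiEval (addBox μ (k, μ.rowLen k)) z / H (addBox μ (k, μ.rowLen k))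
      = -(((rowNode μ k - (z + μ.card) - 1) * ∏ j ∈ range μ.card, (rowNode μ k - rowNode μ j - 1))
          * ∏ j ∈ (range (μ.card + 1)).erase k,
              (z + μ.card - rowNode μ j) / (rowNode μ k - rowNode μ j)) / H μ := by
  set v := rowNode μ
  have hkm : k ∈ range (μ.card + 1) := mem_range.mpr (by omega)
  have hnode := rowNode_eq_sub_ite (rowLen_addBox hk)
  have hφ : phiEval (addBox μ (k, μ.rowLen k)) z
      = (z + μ.card - v k + 1) * ∏ j ∈ (range (μ.card + 1)).erase k, (z + μ.card - v j) := by
    rw [phiEval_eq_prod_rowNode, card_addBox hk, ← mul_prod_erase _ _ hkm, hnode, if_pos rfl]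
    refine congrArg₂ _ (by push_cast; ring) (prod_congr rfl fun j hj => ?_)
    rw [hnode, if_neg (ne_of_mem_erase hj)]
    push_cast
    ring
  have hratio := H_mul_prod_rowNode_sub_sub_one (rowLen_card μ) hkn (rowLen_addBox hk)
  have hW : ∏ j ∈ (range (μ.card + 1)).erase k, (v k - v j) ≠ 0 :=
    prod_ne_zero_iff.mpr fun j hj =>
      sub_ne_zero.mpr ((rowNode_strictMono μ).injective.ne (ne_of_mem_erase hj).symm)
  have hinv : (H (addBox μ (k, μ.rowLen k)))⁻¹ = (∏ j ∈ range μ.card, (v k - v j - 1))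
      / (H μ * ∏ j ∈ (range (μ.card + 1)).erase k, (v k - v j)) := by
    rw [eq_div_iff (mul_ne_zero (H_ne_zero μ) hW), ← hratio, inv_mul_cancel_left₀ (H_ne_zero _)]
  rw [hφ, prod_div_distrib, div_eq_mul_inv _ (H _), hinv]
  ring

theorem D_phiEval_div_H (z : ℚ) (μ : YoungDiagram) :
    D (fun t => phiEval t z / H t) μ = z * phiEval μ (z + 1) / H μ := by
  set n := μ.card
  set v := rowNode μ
  set w : ℚ := z + n
  set Q : ℚ[X] := (X - C (w + 1)) * ∏ j ∈ range n, (X - C (v j + 1))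
  have hQ : Q.Monic := (monic_X_sub_C _).mul (monic_prod_of_monic _ _ fun j _ => monic_X_sub_C _)
  have hdeg : Q.natDegree = #(range (n + 1)) := by
    rw [(monic_X_sub_C _).natDegree_mul (monic_prod_of_monic _ _ fun j _ => monic_X_sub_C _),
      natDegree_prod_of_monic _ _ fun j _ => monic_X_sub_C _]
    simp only [natDegree_X_sub_C, sum_const, card_range, smul_eq_mul, mul_one]
    omega
  have hQv : ∀ k, Q.eval (v k) = (v k - w - 1) * ∏ j ∈ range n, (v k - v j - 1) := fun k => by
    simp only [Q, eval_mul, eval_sub, eval_X, eval_C, eval_prod, sub_add_eq_sub_sub]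
  have hterm : ∀ k ∈ range (n + 1),
      (if AddableRow μ k then phiEval (addBox μ (k, μ.rowLen k)) z / H (addBox μ (k, μ.rowLen k))
        else 0)
      = -(Q.eval (v k) * ∏ j ∈ (range (n + 1)).erase k, (w - v j) / (v k - v j)) / H μ := by
    intro k hk
    have hkn := Nat.lt_succ_iff.mp (mem_range.mp hk)
    split_ifs with hadd
    · rw [phiEval_addBox_div_H hadd hkn, hQv]
    · rw [hQv, prod_rowNode_sub_sub_one_eq_zero hadd hkn, mul_zero, zero_mul, neg_zero, zero_div]
  have hQw : Q.eval w = -phiEval μ z := by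
    simp only [Q, eval_mul, eval_sub, eval_X, eval_C, eval_prod, phiEval_eq_prod_rowNode]
    rw [sub_add_cancel_left, neg_one_mul]
    exact congrArg _ (prod_congr rfl fun j _ => by ring)
  simp only [D]
  rw [addables_eq, sum_image fun a _ b _ h => (Prod.mk.inj h).1, sum_filter, sum_congr rfl hterm,
    ← sum_div, sum_neg_distrib,
    sum_eval_mul_prod_div_eq_eval_sub_prod (rowNode_strictMono μ).injective.injOn hQ hdeg, hQw,
    prod_sub_rowNode_eq_mul_phiEval]
  ring

lemma D_smul (a : ℚ) (g : YoungDiagram → ℚ) : D (a • g) = a • D g := by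
  funext t
  simp only [D, Pi.smul_apply, smul_eq_mul, mul_sub, mul_sum]

theorem iterate_D_phiEval_div_H (r : ℕ) (z : ℚ) :
    D^[r] (fun t => phiEval t z / H t)
      = (∏ j ∈ range r, (z + j)) • fun t => phiEval t (z + r) / H t := by
  induction r with
  | zero => simp
  | succ r ih =>
    rw [Function.iterate_succ_apply', ih, D_smul, prod_range_succ, mul_smul, Nat.cast_succ,
      ← add_assoc]
    congr 1
    funext t
    rw [D_phiEval_div_H, Pi.smul_apply, smul_eq_mul, mul_div_assoc]

end DifferenceOperator

/-- `D^{r+1}(φ_λ(z)/H_λ) = z(z+1)⋯(z+r)·φ_λ(z+r+1)/H_λ` for every `z`; in particular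
`D^{r+1}(φ_λ(−r)/H_λ) = 0`, i.e. `λ ↦ φ_λ(−r)` is a `D`-polynomial of degree at most `r`. -/
theorem Dpow_phi (r : ℕ) (l : YoungDiagram) :
    (∀ z : ℚ, D^[r + 1] (fun t => phiEval t z / H t) l
        = (∏ j ∈ Finset.range (r + 1), (z + (j : ℚ))) * phiEval l (z + (r : ℚ) + 1) / H l) ∧
    D^[r + 1] (fun t => phiEval t (-(r : ℚ)) / H t) l = 0 := by
  refine ⟨fun z => ?_, ?_⟩
  · rw [iterate_D_phiEval_div_H, Pi.smul_apply, smul_eq_mul, Nat.cast_succ, ← add_assoc,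
      mul_div_assoc]
  · rw [iterate_D_phiEval_div_H, Pi.smul_apply,
      prod_eq_zero (mem_range.mpr r.lt_succ_self) (neg_add_cancel _), zero_smul]

end HookDiff
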